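/- Let C be an exact inverse category and f : A → B a morphism of C, with transfer function P″(f) : P(B) → P(A), P″(f)(j) := ((j ∘ f)′)′. Then: (i) P″(f) is injective if and only if f is an epimorphism, and surjective if and only if f is a monomorphism; (ii) P″(f)(0_B) = 0_A and P″(f)(1_B) = f″ := (f′)′; (iii) P″(f)((f*)′) = 0_A; (iv) P″(f)(j₁ ∘ j₂) = P″(f)(j₁) ∘ P″(f)(j₂) for all projections j₁, j₂ on B; (v) j₁ ≤ j₂ implies P″(f)(j₁) ≤ P″(f)(j₂); (vi) P″(f)(j) ≤ f″ for every projection j on B; (vii) if j ≤ (f*)′ then P″(f)(j) = 0_A. -/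

import Mathlib

open CategoryTheory CategoryTheory.Limits

universe v u

/-- An operation assigning to each morphism a morphism in the opposite direction. -/
def MorphismOp (C : Type u) [Category.{v} C] : Type (max u v) :=
  ∀ {A B : C}, (A ⟶ B) → (B ⟶ A)

variable {C : Type u} [Category.{v} C]

/-- `s` is an involution: a contravariant endofunctor which is the identity on objects
and involutive on morphisms. -/
def IsInvolution (s : MorphismOp C) : Prop :=
  (∀ {A B D : C} (f : A ⟶ B) (g : B ⟶ D), s (f ≫ g) = s g ≫ s f) ∧
  (∀ A : C, s (𝟙 A) = 𝟙 A) ∧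
  (∀ {A B : C} (f : A ⟶ B), s (s f) = f)

/-- A projection on `A` is an idempotent endomorphism fixed by the involution `s`. -/
def IsProjection (s : MorphismOp C) {A : C} (i : A ⟶ A) : Prop :=
  i ≫ i = i ∧ s i = i

/-- `g` is a Moore–Penrose generalized inverse of `f` with respect to `s`:
`f g f = f`, `g f g = g`, `(f g)* = f g`, `(g f)* = g f`. -/
def IsMoorePenrose (s : MorphismOp C) {A B : C} (f : A ⟶ B) (g : B ⟶ A) : Prop :=
  f ≫ g ≫ f = f ∧ g ≫ f ≫ g = g ∧ s (f ≫ g) = f ≫ g ∧ s (g ≫ f) = g ≫ f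

/-- `inv` makes `C` an inverse category: each morphism `f` has `inv f` as its unique
generalized inverse (`f ∘ (inv f) ∘ f = f` and `(inv f) ∘ f ∘ (inv f) = inv f`). -/
def IsInverseOp (inv : MorphismOp C) : Prop :=
  ∀ {A B : C} (f : A ⟶ B),
    (f ≫ inv f ≫ f = f ∧ inv f ≫ f ≫ inv f = inv f) ∧
    ∀ g : B ⟶ A, f ≫ g ≫ f = f → g ≫ f ≫ g = g → g = inv f

/-- `u` is a kernel of `f`. -/
def IsKernelOf [HasZeroMorphisms C] {K A B : C} (u : K ⟶ A) (f : A ⟶ B) : Prop :=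
  u ≫ f = 0 ∧ ∀ {X : C} (g : X ⟶ A), g ≫ f = 0 → ∃! h : X ⟶ K, h ≫ u = g

/-- `v` is a cokernel of `f`. -/
def IsCokernelOf [HasZeroMorphisms C] {A B Q : C} (v : B ⟶ Q) (f : A ⟶ B) : Prop :=
  f ≫ v = 0 ∧ ∀ {X : C} (g : B ⟶ X), f ≫ g = 0 → ∃! h : Q ⟶ X, v ≫ h = g

/-- An exact category (in the sense of the paper): a category with a zero object,
kernels and cokernels, in which every monomorphism is a kernel, every epimorphism is a
cokernel, and every morphism factors as a monomorphism composed with an epimorphism. -/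
structure IsExactCategory (C : Type u) [Category.{v} C] [HasZeroObject C]
    [HasZeroMorphisms C] : Prop where
  hasKernels : ∀ {A B : C} (f : A ⟶ B), ∃ (K : C) (u : K ⟶ A), IsKernelOf u f
  hasCokernels : ∀ {A B : C} (f : A ⟶ B), ∃ (Q : C) (v : B ⟶ Q), IsCokernelOf v f
  normal : ∀ {X A : C} (u : X ⟶ A), Mono u → ∃ (B : C) (f : A ⟶ B), IsKernelOf u f
  conormal : ∀ {A B : C} (v : A ⟶ B), Epi v → ∃ (X : C) (f : X ⟶ A), IsCokernelOf v f
  monoEpiFact : ∀ {A B : C} (f : A ⟶ B),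
    ∃ (I : C) (q : A ⟶ I) (p : I ⟶ B), Epi q ∧ Mono p ∧ q ≫ p = f

/-- A Baer*-structure on `C` with respect to `s`: each morphism `f` has a projection
`f′ = prj f` on its domain with `f ∘ g = 0` iff `g` factors through `f′`. -/
structure BaerStar (C : Type u) [Category.{v} C] [HasZeroObject C] [HasZeroMorphisms C]
    (s : MorphismOp C) where
  prj : ∀ {A B : C}, (A ⟶ B) → (A ⟶ A)
  prj_isProjection : ∀ {A B : C} (f : A ⟶ B), IsProjection s (prj f)
  prj_spec : ∀ {A B X : C} (f : A ⟶ B) (g : X ⟶ A),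
    g ≫ f = 0 ↔ ∃ h : X ⟶ A, g = h ≫ prj f

/-- The natural partial order on projections: `e ≤ f` iff `e = e ∘ f`. -/
def ProjLe {A : C} (e f : A ⟶ A) : Prop := f ≫ e = e

/-- `p` is the image of `g`: the smallest subobject of the codomain of `g` through
which `g` factors. -/
def IsImageOf {A B I : C} (p : I ⟶ B) (g : A ⟶ B) : Prop :=
  Mono p ∧ (∃ t : A ⟶ I, t ≫ p = g) ∧
  ∀ {S : C} (t : A ⟶ S) (m : S ⟶ B), Mono m → t ≫ m = g → ∃ w : I ⟶ S, w ≫ m = p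

/-!
In an inverse category idempotents commute; hence `inv` is a contravariant involution and
`f ≫ inv f` is a projection. In an exact inverse category this projection is the double
annihilator `f″`: `f` and `f ≫ inv f` have the same annihilators, and `p″ = p` for every
projection `p`. So the transfer function is conjugation, `P″(f)(j) = f ≫ j ≫ inv f`, and its
properties reduce to identities between commuting idempotents; monotonicity and
`P″(f)(j) ≤ f″` are instances of multiplicativity.
-/

namespace IsInverseOp

variable {inv : MorphismOp C} {A B D : C}

theorem _root_.IsProjection.of_idem_of_inv_eq {p : A ⟶ A} (h₁ : p ≫ p = p) (h₂ : inv p = p) :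
    IsProjection inv p :=
  ⟨h₁, h₂⟩

theorem _root_.IsProjection.inv_eq {p : A ⟶ A} (hp : IsProjection inv p) : inv p = p :=
  hp.2

theorem eq_inv (hinv : IsInverseOp inv) {f : A ⟶ B} {g : B ⟶ A} (h₁ : f ≫ g ≫ f = f)
    (h₂ : g ≫ f ≫ g = g) : g = inv f :=
  (hinv f).2 g h₁ h₂

theorem comp_inv_comp (hinv : IsInverseOp inv) (f : A ⟶ B) : f ≫ inv f ≫ f = f :=
  (hinv f).1.1

theorem inv_comp_inv (hinv : IsInverseOp inv) (f : A ⟶ B) : inv f ≫ f ≫ inv f = inv f :=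
  (hinv f).1.2

theorem inv_inv (hinv : IsInverseOp inv) (f : A ⟶ B) : inv (inv f) = f :=
  (hinv.eq_inv (hinv.inv_comp_inv f) (hinv.comp_inv_comp f)).symm

theorem inv_id (hinv : IsInverseOp inv) (A : C) : inv (𝟙 A) = 𝟙 A :=
  (hinv.eq_inv (by simp) (by simp)).symm

theorem inv_zero [HasZeroMorphisms C] (hinv : IsInverseOp inv) : inv (0 : A ⟶ B) = 0 :=
  (hinv.eq_inv (by simp) (by simp)).symm

theorem inv_eq_self_of_idem (hinv : IsInverseOp inv) {e : A ⟶ A} (he : e ≫ e = e) :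
    inv e = e :=
  (hinv.eq_inv (by rw [he, he]) (by rw [he, he])).symm

theorem comp_idem (hinv : IsInverseOp inv) {e f : A ⟶ A} (he : e ≫ e = e) (hf : f ≫ f = f) :
    (e ≫ f) ≫ (e ≫ f) = e ≫ f := by
  have hxgx := hinv.comp_inv_comp (e ≫ f)
  have hgxg := hinv.inv_comp_inv (e ≫ f)
  simp only [Category.assoc] at hxgx hgxg
  -- `f ≫ inv (e ≫ f) ≫ e` is a generalized inverse of `e ≫ f`, which forces `inv (e ≫ f)` to
  -- be idempotent.
  have hconj : f ≫ inv (e ≫ f) ≫ e = inv (e ≫ f) := by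
    refine hinv.eq_inv ?_ ?_ <;>
      simp only [Category.assoc, reassoc_of% hf, reassoc_of% he, hxgx, reassoc_of% hgxg]
  have hinv_idem : inv (e ≫ f) ≫ inv (e ≫ f) = inv (e ≫ f) := by
    calc inv (e ≫ f) ≫ inv (e ≫ f)
        = (f ≫ inv (e ≫ f) ≫ e) ≫ (f ≫ inv (e ≫ f) ≫ e) := by rw [hconj]
      _ = f ≫ inv (e ≫ f) ≫ e := by simp only [Category.assoc, reassoc_of% hgxg]
      _ = inv (e ≫ f) := hconj
  have hself : e ≫ f = inv (e ≫ f) := by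
    conv_lhs => rw [← hinv.inv_inv (e ≫ f)]
    exact hinv.inv_eq_self_of_idem hinv_idem
  rw [hself]
  exact hinv_idem

theorem idem_comm (hinv : IsInverseOp inv) {e f : A ⟶ A} (he : e ≫ e = e) (hf : f ≫ f = f) :
    e ≫ f = f ≫ e := by
  have hef := hinv.comp_idem he hf
  have hfe := hinv.comp_idem hf he
  calc e ≫ f = inv (e ≫ f) := (hinv.inv_eq_self_of_idem hef).symm
    _ = f ≫ e := by
      refine (hinv.eq_inv ?_ ?_).symm
      · simpa only [Category.assoc, reassoc_of% he, reassoc_of% hf] using hef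
      · simpa only [Category.assoc, reassoc_of% he, reassoc_of% hf] using hfe

theorem inv_comp (hinv : IsInverseOp inv) (f : A ⟶ B) (g : B ⟶ D) :
    inv (f ≫ g) = inv g ≫ inv f := by
  have hcomm : g ≫ inv g ≫ inv f ≫ f = inv f ≫ f ≫ g ≫ inv g := by
    simpa only [Category.assoc] using
      hinv.idem_comm (e := g ≫ inv g) (f := inv f ≫ f)
        (by simp only [Category.assoc, hinv.inv_comp_inv])
        (by simp only [Category.assoc, hinv.comp_inv_comp])
  refine (hinv.eq_inv ?_ ?_).symm
  · simp only [Category.assoc, reassoc_of% hcomm, reassoc_of% hinv.comp_inv_comp f,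
      hinv.comp_inv_comp]
  · simp only [Category.assoc, ← reassoc_of% hcomm, reassoc_of% hinv.inv_comp_inv g,
      hinv.inv_comp_inv]

theorem isProjection_comp_inv_self (hinv : IsInverseOp inv) (f : A ⟶ B) :
    IsProjection inv (f ≫ inv f) :=
  .of_idem_of_inv_eq (by simp only [Category.assoc, hinv.inv_comp_inv])
    (by rw [hinv.inv_comp, hinv.inv_inv])

theorem isProjection_inv_comp_self (hinv : IsInverseOp inv) (f : A ⟶ B) :
    IsProjection inv (inv f ≫ f) :=
  .of_idem_of_inv_eq (by simp only [Category.assoc, hinv.comp_inv_comp])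
    (by rw [hinv.inv_comp, hinv.inv_inv])

theorem isProjection_comp (hinv : IsInverseOp inv) {i j : A ⟶ A} (hi : IsProjection inv i)
    (hj : IsProjection inv j) : IsProjection inv (i ≫ j) :=
  .of_idem_of_inv_eq (hinv.comp_idem hi.1 hj.1)
    (by rw [hinv.inv_comp, hi.inv_eq, hj.inv_eq, hinv.idem_comm hj.1 hi.1])

theorem isProjection_inv_comp_comp (hinv : IsInverseOp inv) (f : A ⟶ B) {i : A ⟶ A}
    (hi : IsProjection inv i) : IsProjection inv (inv f ≫ i ≫ f) := by
  refine .of_idem_of_inv_eq ?_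
    (by rw [hinv.inv_comp, hinv.inv_comp, hi.inv_eq, hinv.inv_inv, Category.assoc])
  have hcomm := hinv.idem_comm (hinv.isProjection_comp_inv_self f).1 hi.1
  simp only [Category.assoc] at hcomm
  simp only [Category.assoc, reassoc_of% hcomm, reassoc_of% hi.1, hinv.comp_inv_comp]

theorem isProjection_id (hinv : IsInverseOp inv) (A : C) : IsProjection inv (𝟙 A) :=
  .of_idem_of_inv_eq (Category.id_comp _) (hinv.inv_id A)

theorem inv_comp_self_comp_comm (hinv : IsInverseOp inv) (f : A ⟶ B) {j : B ⟶ B}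
    (hj : j ≫ j = j) : inv f ≫ f ≫ j = j ≫ inv f ≫ f := by
  simpa only [Category.assoc] using hinv.idem_comm (hinv.isProjection_inv_comp_self f).1 hj

theorem mono_iff_comp_inv_eq_id (hinv : IsInverseOp inv) (f : A ⟶ B) :
    Mono f ↔ f ≫ inv f = 𝟙 A :=
  ⟨fun _ => (cancel_mono f).1 (by rw [Category.assoc, hinv.comp_inv_comp, Category.id_comp]),
    fun h => SplitMono.mono ⟨inv f, h⟩⟩

theorem epi_iff_inv_comp_eq_id (hinv : IsInverseOp inv) (f : A ⟶ B) :
    Epi f ↔ inv f ≫ f = 𝟙 B :=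
  ⟨fun _ => (cancel_epi f).1 (by rw [hinv.comp_inv_comp, Category.comp_id]),
    fun h => SplitEpi.epi ⟨inv f, h⟩⟩

theorem eq_of_isProjection_of_comp_eq (hinv : IsInverseOp inv) {p q : A ⟶ A}
    (hp : IsProjection inv p) (hq : IsProjection inv q) (hpq : p ≫ q = p) (hqp : q ≫ p = q) :
    p = q :=
  calc p = inv (p ≫ q) := by rw [hpq, hp.inv_eq]
    _ = q ≫ p := by rw [hinv.inv_comp, hp.inv_eq, hq.inv_eq]
    _ = q := hqp

end IsInverseOp

namespace IsExactCategory

variable [HasZeroObject C] [HasZeroMorphisms C] {inv : MorphismOp C} {A X : C}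

theorem exists_mono_eq_inv_comp (hC : IsExactCategory C) (hinv : IsInverseOp inv)
    {p : A ⟶ A} (hp : p ≫ p = p) : ∃ (I : C) (m : I ⟶ A), Mono m ∧ p = inv m ≫ m := by
  obtain ⟨I, q, m, hq, hm, rfl⟩ := hC.monoEpiFact p
  have hmq : m ≫ q = 𝟙 I := by
    refine (cancel_mono m).1 ((cancel_epi q).1 ?_)
    simpa only [Category.assoc, Category.id_comp] using hp
  refine ⟨I, m, hm, ?_⟩
  rw [hinv.eq_inv (f := m) (g := q) (by rw [reassoc_of% hmq])
    (by rw [hmq, Category.comp_id])]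

-- Write `p = inv m ≫ m` with `m` mono and let `v` be a cokernel of `p`. As `inv v ≫ p = 0`, `v`
-- factors through `p′`, so `g ≫ v = 0`. Now `m` is a kernel of some `s`, and `s` factors
-- through `v`; hence `g` factors through `m`, which `p` fixes.
theorem comp_eq_self_of_comp_prj_eq_zero (hC : IsExactCategory C) (hinv : IsInverseOp inv)
    (Bs : BaerStar C inv) {p : A ⟶ A} (hp : IsProjection inv p) {g : X ⟶ A}
    (hg : g ≫ Bs.prj p = 0) : g ≫ p = g := by
  obtain ⟨I, m, hm, rfl⟩ := hC.exists_mono_eq_inv_comp hinv hp.1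
  obtain ⟨Q, v, hpv, hv⟩ := hC.hasCokernels (inv m ≫ m)
  obtain ⟨h, hh⟩ := (Bs.prj_spec (inv m ≫ m) (inv v)).1 (by
    rw [← hp.inv_eq, ← hinv.inv_comp, hpv, hinv.inv_zero])
  have hgv : g ≫ v = 0 := by
    rw [← hinv.inv_inv v, hh, hinv.inv_comp, (Bs.prj_isProjection _).inv_eq, reassoc_of% hg,
      zero_comp]
  obtain ⟨B, s, hms, hs⟩ := hC.normal m hm
  obtain ⟨w, rfl, -⟩ := hv s (by rw [Category.assoc, hms, comp_zero])
  obtain ⟨k, rfl, -⟩ := hs g (by rw [reassoc_of% hgv, zero_comp])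
  rw [Category.assoc, hinv.comp_inv_comp]

end IsExactCategory

namespace BaerStar

variable [HasZeroObject C] [HasZeroMorphisms C] {inv : MorphismOp C} (Bs : BaerStar C inv)
  {A B : C}

theorem prj_comp_self (f : A ⟶ B) : Bs.prj f ≫ f = 0 :=
  (Bs.prj_spec f _).2 ⟨𝟙 A, (Category.id_comp _).symm⟩

theorem comp_prj_inv (hinv : IsInverseOp inv) (f : A ⟶ B) : f ≫ Bs.prj (inv f) = 0 := by
  rw [← hinv.inv_inv (f ≫ _), hinv.inv_comp, (Bs.prj_isProjection _).inv_eq, prj_comp_self,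
    hinv.inv_zero]

theorem prj_eq_of_forall (hinv : IsInverseOp inv) {f : A ⟶ B} {p : A ⟶ A}
    (hp : IsProjection inv p) (hspec : ∀ {X : C} (g : X ⟶ A), g ≫ f = 0 ↔ ∃ h, g = h ≫ p) :
    Bs.prj f = p := by
  refine hinv.eq_of_isProjection_of_comp_eq (Bs.prj_isProjection f) hp ?_ ?_
  · obtain ⟨h, hh⟩ := (hspec (Bs.prj f)).1 (Bs.prj_comp_self f)
    rw [hh, Category.assoc, hp.1]
  · obtain ⟨h, hh⟩ := (Bs.prj_spec f p).1 ((hspec p).2 ⟨p, hp.1.symm⟩)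
    rw [hh, Category.assoc, (Bs.prj_isProjection f).1]

theorem prj_comp_inv_self (hinv : IsInverseOp inv) (f : A ⟶ B) :
    Bs.prj (f ≫ inv f) = Bs.prj f := by
  refine Bs.prj_eq_of_forall hinv (Bs.prj_isProjection f) fun g => ?_
  rw [← Bs.prj_spec f g]
  refine ⟨fun hg => ?_, fun hg => by rw [reassoc_of% hg, zero_comp]⟩
  rw [← hinv.comp_inv_comp f, reassoc_of% hg, zero_comp]

theorem prj_prj_of_isProjection (hinv : IsInverseOp inv) (hC : IsExactCategory C)
    {p : A ⟶ A} (hp : IsProjection inv p) : Bs.prj (Bs.prj p) = p := by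
  refine Bs.prj_eq_of_forall hinv hp fun g => ⟨fun hg => ?_, ?_⟩
  · exact ⟨g, (hC.comp_eq_self_of_comp_prj_eq_zero hinv Bs hp hg).symm⟩
  · rintro ⟨h, rfl⟩
    have hp0 := Bs.comp_prj_inv hinv p
    rw [hp.inv_eq] at hp0
    rw [Category.assoc, hp0, comp_zero]

theorem prj_prj (hinv : IsInverseOp inv) (hC : IsExactCategory C) (f : A ⟶ B) :
    Bs.prj (Bs.prj f) = f ≫ inv f := by
  rw [← Bs.prj_comp_inv_self hinv f,
    Bs.prj_prj_of_isProjection hinv hC (hinv.isProjection_comp_inv_self f)]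

theorem prj_prj_zero (hinv : IsInverseOp inv) (hC : IsExactCategory C) :
    Bs.prj (Bs.prj (0 : A ⟶ B)) = 0 := by
  rw [Bs.prj_prj hinv hC, zero_comp]

theorem prj_prj_comp (hinv : IsInverseOp inv) (hC : IsExactCategory C) (f : A ⟶ B)
    {j : B ⟶ B} (hj : IsProjection inv j) : Bs.prj (Bs.prj (f ≫ j)) = f ≫ j ≫ inv f := by
  rw [Bs.prj_prj hinv hC, hinv.inv_comp, hj.inv_eq, Category.assoc, reassoc_of% hj.1]

theorem prj_prj_comp_injective_iff_epi (hinv : IsInverseOp inv) (hC : IsExactCategory C)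
    (f : A ⟶ B) :
    (∀ j₁ j₂ : B ⟶ B, IsProjection inv j₁ → IsProjection inv j₂ →
        Bs.prj (Bs.prj (f ≫ j₁)) = Bs.prj (Bs.prj (f ≫ j₂)) → j₁ = j₂) ↔ Epi f := by
  rw [hinv.epi_iff_inv_comp_eq_id]
  constructor
  · intro hinj
    refine hinj _ _ (hinv.isProjection_inv_comp_self f) (hinv.isProjection_id B) ?_
    rw [Bs.prj_prj_comp hinv hC f (hinv.isProjection_inv_comp_self f),
      Bs.prj_prj_comp hinv hC f (hinv.isProjection_id B)]
    simp only [Category.assoc, Category.id_comp, reassoc_of% hinv.comp_inv_comp f]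
  · intro hf j₁ j₂ hj₁ hj₂ hj
    rw [Bs.prj_prj_comp hinv hC f hj₁, Bs.prj_prj_comp hinv hC f hj₂] at hj
    simpa only [Category.assoc, reassoc_of% hf, hf, Category.comp_id] using inv f ≫= hj =≫ f

theorem prj_prj_comp_surjective_iff_mono (hinv : IsInverseOp inv) (hC : IsExactCategory C)
    (f : A ⟶ B) :
    (∀ i : A ⟶ A, IsProjection inv i →
        ∃ j : B ⟶ B, IsProjection inv j ∧ Bs.prj (Bs.prj (f ≫ j)) = i) ↔ Mono f := by
  constructor
  · intro hsurj
    obtain ⟨j, hj, hfj⟩ := hsurj (𝟙 A) (hinv.isProjection_id A)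
    rw [Bs.prj_prj_comp hinv hC f hj] at hfj
    exact SplitMono.mono ⟨j ≫ inv f, hfj⟩
  · intro hf i hi
    have hfi := hinv.isProjection_inv_comp_comp f hi
    refine ⟨inv f ≫ i ≫ f, hfi, ?_⟩
    have hf' := (hinv.mono_iff_comp_inv_eq_id f).1 hf
    rw [Bs.prj_prj_comp hinv hC f hfi]
    simp only [Category.assoc, reassoc_of% hf', hf', Category.comp_id]

theorem prj_prj_comp_comp (hinv : IsInverseOp inv) (hC : IsExactCategory C) (f : A ⟶ B)
    {j₁ j₂ : B ⟶ B} (hj₁ : IsProjection inv j₁) (hj₂ : IsProjection inv j₂) :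
    Bs.prj (Bs.prj (f ≫ j₁ ≫ j₂)) = Bs.prj (Bs.prj (f ≫ j₁)) ≫ Bs.prj (Bs.prj (f ≫ j₂)) := by
  rw [Bs.prj_prj_comp hinv hC f (hinv.isProjection_comp hj₁ hj₂), Bs.prj_prj_comp hinv hC f hj₁,
    Bs.prj_prj_comp hinv hC f hj₂]
  simp only [Category.assoc, reassoc_of% hinv.inv_comp_self_comp_comm f hj₂.1,
    hinv.inv_comp_inv]

theorem projLe_prj_prj_comp (hinv : IsInverseOp inv) (hC : IsExactCategory C) (f : A ⟶ B)
    {j₁ j₂ : B ⟶ B} (hj₁ : IsProjection inv j₁) (hj₂ : IsProjection inv j₂)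
    (hj : ProjLe j₁ j₂) : ProjLe (Bs.prj (Bs.prj (f ≫ j₁))) (Bs.prj (Bs.prj (f ≫ j₂))) := by
  rw [ProjLe, ← Bs.prj_prj_comp_comp hinv hC f hj₂ hj₁, hj]

theorem projLe_prj_prj_comp_prj_prj (hinv : IsInverseOp inv) (hC : IsExactCategory C)
    (f : A ⟶ B) {j : B ⟶ B} (hj : IsProjection inv j) :
    ProjLe (Bs.prj (Bs.prj (f ≫ j))) (Bs.prj (Bs.prj f)) := by
  have h := Bs.prj_prj_comp_comp hinv hC f (hinv.isProjection_id B) hj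
  rw [Category.id_comp, Category.comp_id] at h
  exact h.symm

theorem prj_prj_comp_eq_zero_of_projLe (hinv : IsInverseOp inv) (hC : IsExactCategory C) (f : A ⟶ B)
    {j : B ⟶ B} (hj : ProjLe j (Bs.prj (inv f))) : Bs.prj (Bs.prj (f ≫ j)) = 0 := by
  rw [← hj, ← Category.assoc, Bs.comp_prj_inv hinv, zero_comp, Bs.prj_prj_zero hinv hC]

end BaerStar

/-- In an exact inverse category, the transfer function
`P″(f)(j) = ((j ∘ f)′)′` satisfies: (i) injective iff `f` epi, surjective iff `f` mono;
(ii) `P″(f)(0) = 0` and `P″(f)(1) = f″`; (iii) `P″(f)((f*)′) = 0`; (iv) it is a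
homomorphism of meet semilattices of projections; (v) it is order preserving;
(vi) `P″(f)(j) ≤ f″`; (vii) `P″(f)(j) = 0` if `j ≤ (f*)′`. -/
theorem stmt18 [HasZeroObject C] [HasZeroMorphisms C] (inv : MorphismOp C)
    (hinv : IsInverseOp inv) (hC : IsExactCategory C) (Bs : BaerStar C inv)
    {A B : C} (f : A ⟶ B) :
    ((∀ j₁ j₂ : B ⟶ B, IsProjection inv j₁ → IsProjection inv j₂ →
        Bs.prj (Bs.prj (f ≫ j₁)) = Bs.prj (Bs.prj (f ≫ j₂)) → j₁ = j₂) ↔ Epi f) ∧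
    ((∀ i : A ⟶ A, IsProjection inv i →
        ∃ j : B ⟶ B, IsProjection inv j ∧ Bs.prj (Bs.prj (f ≫ j)) = i) ↔ Mono f) ∧
    Bs.prj (Bs.prj (f ≫ (0 : B ⟶ B))) = (0 : A ⟶ A) ∧
    Bs.prj (Bs.prj (f ≫ 𝟙 B)) = Bs.prj (Bs.prj f) ∧
    Bs.prj (Bs.prj (f ≫ Bs.prj (inv f))) = (0 : A ⟶ A) ∧
    (∀ j₁ j₂ : B ⟶ B, IsProjection inv j₁ → IsProjection inv j₂ →
      Bs.prj (Bs.prj (f ≫ (j₁ ≫ j₂))) =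
        Bs.prj (Bs.prj (f ≫ j₁)) ≫ Bs.prj (Bs.prj (f ≫ j₂))) ∧
    (∀ j₁ j₂ : B ⟶ B, IsProjection inv j₁ → IsProjection inv j₂ → ProjLe j₁ j₂ →
      ProjLe (Bs.prj (Bs.prj (f ≫ j₁))) (Bs.prj (Bs.prj (f ≫ j₂)))) ∧
    (∀ j : B ⟶ B, IsProjection inv j →
      ProjLe (Bs.prj (Bs.prj (f ≫ j))) (Bs.prj (Bs.prj f))) ∧
    (∀ j : B ⟶ B, IsProjection inv j → ProjLe j (Bs.prj (inv f)) →
      Bs.prj (Bs.prj (f ≫ j)) = (0 : A ⟶ A)) :=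
  ⟨Bs.prj_prj_comp_injective_iff_epi hinv hC f,
    Bs.prj_prj_comp_surjective_iff_mono hinv hC f,
    by rw [comp_zero, Bs.prj_prj_zero hinv hC],
    by rw [Category.comp_id],
    Bs.prj_prj_comp_eq_zero_of_projLe hinv hC f (Bs.prj_isProjection _).1,
    fun _ _ hj₁ hj₂ => Bs.prj_prj_comp_comp hinv hC f hj₁ hj₂,
    fun _ _ hj₁ hj₂ => Bs.projLe_prj_prj_comp hinv hC f hj₁ hj₂,
    fun _ => Bs.projLe_prj_prj_comp_prj_prj hinv hC f,
    fun _ _ => Bs.prj_prj_comp_eq_zero_of_projLe hinv hC f⟩
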